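/- For all natural numbers l ≥ 1 and k, Σ over pairs (l₁,l₂) with l₁+l₂ = l−1 and triples (k₁,k₂,k₃) with k₁+k₂+k₃ = k of [2^{k₃}/k₃!] · [(l₁+k₁)!/(l₁! k₁!)] · [(l₂+k₂)!/(l₂! k₂!)] · [k!(l−1)!/((l+k−1)!)] ≤ e² (l+k)!. -/

import Mathlib

/-! Each summand factors as `2^{k₃}/k₃!` times the weight
`C(l₁+k₁, l₁) C(l₂+k₂, l₂) / C(l-1+k, l-1)`, which is at most `1` by Vandermonde's identity.
For fixed `l₁, k₁` the remaining sum over `k₂` is a partial sum of the series of `e²`, so the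
whole sum is at most `l (k+1) e² ≤ e² (l+k)!`. -/

open Finset Nat

theorem Nat.add_choose_mul_add_choose_le (a b c d : ℕ) :
    (a + b).choose a * (c + d).choose c ≤ (a + c + (b + d)).choose (a + c) := by
  rw [show a + c + (b + d) = a + b + (c + d) by ring, Nat.add_choose_eq (a + b) (c + d) (a + c)]
  exact single_le_sum (f := fun ij => (a + b).choose ij.1 * (c + d).choose ij.2)
    (fun _ _ => Nat.zero_le _) (a := (a, c)) (mem_antidiagonal.mpr rfl)

theorem Nat.mul_succ_le_factorial_add (l k : ℕ) : l * (k + 1) ≤ (l + k)! := by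
  rcases l with _ | n
  · simp
  calc (n + 1) * (k + 1) ≤ (n + 1)! * (n + 1 + 1) ^ k :=
        Nat.mul_le_mul (Nat.self_le_factorial _)
          (Nat.lt_two_pow_self.trans_le (Nat.pow_le_pow_left (by omega) k))
    _ ≤ (n + 1 + k)! := Nat.factorial_mul_pow_le_factorial

theorem Real.sum_range_pow_sub_div_factorial_le_exp {x : ℝ} (hx : 0 ≤ x) (m : ℕ) :
    ∑ j ∈ range (m + 1), x ^ (m - j) / ((m - j)! : ℝ) ≤ exp x := by
  have hreflect := sum_range_reflect (fun j => x ^ j / (j ! : ℝ)) (m + 1)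
  simp only [Nat.add_sub_cancel] at hreflect
  exact hreflect ▸ Real.sum_le_exp_of_nonneg hx _

theorem add_choose_weight_le_one {l l₁ k k₁ k₂ : ℕ} (hl₁ : l₁ < l) (hk : k₁ + k₂ ≤ k) :
    ((l₁ + k₁)! : ℝ) / (l₁ ! * k₁ !) * ((l - 1 - l₁ + k₂)! / ((l - 1 - l₁)! * k₂ !))
      * (k ! * (l - 1)! / (l + k - 1)!) ≤ 1 := by
  obtain ⟨n, rfl⟩ : ∃ n, l = n + 1 := ⟨l - 1, by omega⟩
  obtain ⟨l₂, rfl⟩ : ∃ l₂, n = l₁ + l₂ := ⟨n - l₁, by omega⟩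
  have hchoose : (l₁ + k₁).choose l₁ * (l₂ + k₂).choose l₂ ≤ (l₁ + l₂ + k).choose (l₁ + l₂) :=
    (Nat.add_choose_mul_add_choose_le _ _ _ _).trans (Nat.choose_le_choose _ (by omega))
  have hpos : (0 : ℝ) < (l₁ + l₂ + k).choose (l₁ + l₂) := by
    exact_mod_cast Nat.choose_pos (Nat.le_add_right _ _)
  simp only [Nat.add_sub_cancel, Nat.add_sub_cancel_left,
    show l₁ + l₂ + 1 + k - 1 = l₁ + l₂ + k by omega, ← Nat.cast_add_choose]
  rw [mul_comm (k ! : ℝ), ← inv_div, ← Nat.cast_add_choose, ← div_eq_mul_inv, div_le_one hpos]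
  exact_mod_cast hchoose

theorem double_multinomial_estimate_general (l k : ℕ) :
    ∑ l₁ ∈ Finset.range l, ∑ k₁ ∈ Finset.range (k + 1), ∑ k₂ ∈ Finset.range (k + 1 - k₁),
        (2 ^ (k - k₁ - k₂) / ((k - k₁ - k₂).factorial : ℝ))
          * (((l₁ + k₁).factorial : ℝ) / ((l₁.factorial : ℝ) * (k₁.factorial : ℝ)))
          * ((((l - 1 - l₁) + k₂).factorial : ℝ)
              / (((l - 1 - l₁).factorial : ℝ) * (k₂.factorial : ℝ)))
          * ((k.factorial : ℝ) * ((l - 1).factorial : ℝ) / ((l + k - 1).factorial : ℝ))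
      ≤ Real.exp 2 * ((l + k).factorial : ℝ) := by
  calc _ ≤ ∑ l₁ ∈ range l, ∑ k₁ ∈ range (k + 1), ∑ k₂ ∈ range (k + 1 - k₁),
          (2 : ℝ) ^ (k - k₁ - k₂) / ((k - k₁ - k₂)! : ℝ) := by
        refine sum_le_sum fun l₁ hl₁ => sum_le_sum fun k₁ hk₁ => sum_le_sum fun k₂ hk₂ => ?_
        simp only [mem_range] at hl₁ hk₁ hk₂
        simp only [mul_assoc]
        refine mul_le_of_le_one_right (by positivity) ?_
        simpa only [mul_assoc] using add_choose_weight_le_one (k₂ := k₂) hl₁ (by omega)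
    _ ≤ ∑ _l₁ ∈ range l, ∑ _k₁ ∈ range (k + 1), Real.exp 2 := by
        refine sum_le_sum fun _ _ => sum_le_sum fun k₁ hk₁ => ?_
        rw [show k + 1 - k₁ = k - k₁ + 1 by simp only [mem_range] at hk₁; omega]
        exact Real.sum_range_pow_sub_div_factorial_le_exp zero_le_two _
    _ = Real.exp 2 * (l * (k + 1) : ℕ) := by
        simp only [sum_const, card_range, nsmul_eq_mul]; push_cast; ring
    _ ≤ Real.exp 2 * ((l + k)! : ℝ) := by
        gcongr; exact_mod_cast Nat.mul_succ_le_factorial_add l k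

theorem double_multinomial_estimate (l k : ℕ) (hl : 1 ≤ l) :
    ∑ l₁ ∈ Finset.range l, ∑ k₁ ∈ Finset.range (k + 1), ∑ k₂ ∈ Finset.range (k + 1 - k₁),
        (2 ^ (k - k₁ - k₂) / ((k - k₁ - k₂).factorial : ℝ))
          * (((l₁ + k₁).factorial : ℝ) / ((l₁.factorial : ℝ) * (k₁.factorial : ℝ)))
          * ((((l - 1 - l₁) + k₂).factorial : ℝ)
              / (((l - 1 - l₁).factorial : ℝ) * (k₂.factorial : ℝ)))
          * ((k.factorial : ℝ) * ((l - 1).factorial : ℝ) / ((l + k - 1).factorial : ℝ))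
      ≤ Real.exp 2 * ((l + k).factorial : ℝ) :=
  double_multinomial_estimate_general l k
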